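/- Let R be a commutative noetherian local domain of Krull dimension 1. Then a subcategory 𝒞 of the category of finitely generated R-modules is IE-closed (equivalently, a torsion-free class) if and only if 𝒞 is one of the following four subcategories: the zero subcategory; the subcategory of finitely generated R-modules of finite length; the subcategory of torsion-free finitely generated R-modules (modules M such that rx = 0 with r ∈ R, r ≠ 0, x ∈ M implies x = 0); or all of mod R. -/

import Mathlib

/-!
A module with a nonzero torsion element `x` has a simple submodule inside `Rx` (which has finite
length since `dim R = 1`), and it is the image of an endomorphism, because over a local ring every
nonzero finitely generated module maps onto every simple module. Extensions then give all modules
of finite length.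

If some `M ∈ 𝒞` has an element `x` with zero annihilator, a linear form `φ` with `φ x = a ≠ 0`
(obtained by embedding `M ⧸ torsion` into a free module) makes `T = im (φ(-) • x)` an image in `𝒞`
with `a • Rx ⊆ T ⊆ Rx ≅ R`. Climbing from `T` to `Rx` one simple factor `S/T` at a time, `S` is the
image in `M` of the fibre product of `M → M ⧸ T ← M` (the right map onto the simple `S/T`), an
extension of `M` by `T`. Hence `R ∈ 𝒞`, so all `Rⁿ ∈ 𝒞`, and a torsion-free module, being a
quotient of some `Rᵏ` and a submodule of some `Rⁿ`, is an image.

Every module is an extension of its torsion-free quotient by its torsion submodule, which has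
finite length; so `𝒞` is determined by whether it contains a module with torsion and a module
which is not torsion.
-/

universe u

section Defs

variable (A : Type u) [Ring A]

/-- `C` is a subcategory of `mod A`: it is closed under isomorphisms, contains the zero
modules, and consists of finitely generated modules. -/
def IsModSubcat (C : Set (ModuleCat.{u} A)) : Prop :=
  (∀ M N : ModuleCat.{u} A, (M ≃ₗ[A] N) → M ∈ C → N ∈ C) ∧
  (∀ M : ModuleCat.{u} A, Subsingleton M → M ∈ C) ∧
  (∀ M ∈ C, Module.Finite A M)

/-- `C` is closed under submodules. -/
def SubmoduleClosed (C : Set (ModuleCat.{u} A)) : Prop :=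
  ∀ M ∈ C, ∀ N : Submodule A M, ModuleCat.of A N ∈ C

/-- `C` is closed under quotient modules. -/
def QuotClosed (C : Set (ModuleCat.{u} A)) : Prop :=
  ∀ M ∈ C, ∀ N : Submodule A M, ModuleCat.of A (M ⧸ N) ∈ C

/-- `C` is closed under images: for every `A`-linear map `f : C₁ → C₂` with `C₁, C₂ ∈ C`,
the image of `f` belongs to `C`. -/
def ImagesClosed (C : Set (ModuleCat.{u} A)) : Prop :=
  ∀ M₁ ∈ C, ∀ M₂ ∈ C, ∀ f : M₁ →ₗ[A] M₂, ModuleCat.of A (LinearMap.range f) ∈ C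

/-- `C` is closed under kernels: for every `A`-linear map `f : C₁ → C₂` with `C₁, C₂ ∈ C`,
the kernel of `f` belongs to `C`. -/
def KernelsClosed (C : Set (ModuleCat.{u} A)) : Prop :=
  ∀ M₁ ∈ C, ∀ M₂ ∈ C, ∀ f : M₁ →ₗ[A] M₂, ModuleCat.of A (LinearMap.ker f) ∈ C

/-- `C` is closed under extensions: for every short exact sequence
`0 → L → M → N → 0` of finitely generated modules with `L, N ∈ C`, we have `M ∈ C`. -/
def ExtClosed (C : Set (ModuleCat.{u} A)) : Prop :=
  ∀ (L M N : ModuleCat.{u} A), Module.Finite A M →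
    ∀ (f : L →ₗ[A] M) (g : M →ₗ[A] N),
      Function.Injective f → Function.Surjective g →
      LinearMap.range f = LinearMap.ker g →
      L ∈ C → N ∈ C → M ∈ C

end Defs

open IsLocalRing Submodule

section SimpleModule

variable {R M : Type*} [CommRing R] [IsLocalRing R] [AddCommGroup M] [Module R M]

theorem IsLocalRing.nonempty_linearEquiv_of_isSimpleModule (S S' : Type*) [AddCommGroup S]
    [Module R S] [AddCommGroup S'] [Module R S'] [IsSimpleModule R S] [IsSimpleModule R S'] :
    Nonempty (S ≃ₗ[R] S') := by
  obtain ⟨I, hI, ⟨e⟩⟩ := isSimpleModule_iff_quot_maximal.mp ‹IsSimpleModule R S›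
  obtain ⟨I', hI', ⟨e'⟩⟩ := isSimpleModule_iff_quot_maximal.mp ‹IsSimpleModule R S'›
  rw [eq_maximalIdeal hI] at e
  rw [eq_maximalIdeal hI'] at e'
  exact ⟨e.trans e'.symm⟩

theorem IsLocalRing.exists_surjective_of_isSimpleModule [Module.Finite R M] [Nontrivial M]
    (S : Type*) [AddCommGroup S] [Module R S] [IsSimpleModule R S] :
    ∃ f : M →ₗ[R] S, Function.Surjective f := by
  obtain ⟨N, hN⟩ := IsCoatomic.exists_coatom (Submodule R M)
  have := isSimpleModule_iff_isCoatom.mpr hN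
  obtain ⟨e⟩ := nonempty_linearEquiv_of_isSimpleModule (R := R) (M ⧸ N) S
  exact ⟨e.toLinearMap ∘ₗ N.mkQ, e.surjective.comp N.mkQ_surjective⟩

end SimpleModule

theorem Submodule.exists_isSimpleModule_le {R M : Type*} [Ring R] [AddCommGroup M] [Module R M]
    {N : Submodule R M} [IsArtinian R N] (hN : N ≠ ⊥) :
    ∃ S ≤ N, IsSimpleModule R S := by
  have : Nontrivial N := nontrivial_iff_ne_bot.mpr hN
  have : IsAtomic (Submodule R N) := isAtomic_of_orderBot_wellFounded_lt wellFounded_lt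
  obtain ⟨A, hA⟩ := IsAtomic.exists_atom (Submodule R N)
  have := isSimpleModule_iff_isAtom.mpr hA
  exact ⟨A.map N.subtype, map_subtype_le N A,
    .congr (equivMapOfInjective _ N.injective_subtype A).symm⟩

section FiniteLength

variable {R M : Type*} [CommRing R] [IsNoetherianRing R] [IsDomain R] [Ring.KrullDimLE 1 R]
  [AddCommGroup M] [Module R M]

theorem isArtinianRing_quotient_of_ne_bot {I : Ideal R} (hI : I ≠ ⊥) : IsArtinianRing (R ⧸ I) :=
  have : Ring.KrullDimLE 0 (R ⧸ I) :=
    Ideal.krullDimLE_zero_quotient_iff_forall_minimalPrimes_isMaximal.mpr fun _ hJ ↦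
      hJ.1.1.isMaximal_of_ne_bot (ne_bot_of_le_ne_bot hI hJ.1.2)
  IsNoetherianRing.isArtinianRing_of_krullDimLE_zero

theorem isFiniteLength_of_isTorsion [Module.Finite R M] (hM : Module.IsTorsion R M) :
    IsFiniteLength R M := by
  obtain ⟨r, hr, hr0⟩ := annihilator_top_inter_nonZeroDivisors hM
  have hann : Module.annihilator R M ≠ ⊥ := by
    rw [← annihilator_top]
    exact (Submodule.ne_bot_iff _).mpr ⟨r, hr, nonZeroDivisors.ne_zero hr0⟩
  -- `M` is a finitely generated module over the artinian ring `R ⧸ ann M`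
  let := Module.quotientAnnihilator (R := R) (M := M)
  have := isArtinianRing_quotient_of_ne_bot hann
  have : Module.Finite (R ⧸ Module.annihilator R M) M := .of_restrictScalars_finite R _ M
  have : IsArtinian R M :=
    isArtinian_of_surjective_algebraMap (Ideal.Quotient.mk_surjective (I := Module.annihilator R M))
  exact isFiniteLength_iff_isNoetherian_isArtinian.mpr ⟨inferInstance, this⟩

theorem isArtinian_of_isTorsionBy [Module.Finite R M] {a : R} (ha : a ≠ 0)
    (h : Module.IsTorsionBy R M a) : IsArtinian R M :=
  (isFiniteLength_iff_isNoetherian_isArtinian.mp (isFiniteLength_of_isTorsion fun x ↦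
    ⟨⟨a, mem_nonZeroDivisors_of_ne_zero ha⟩, h (x := x)⟩)).2

end FiniteLength

theorem Module.IsTorsion.subsingleton {R M : Type*} [CommRing R] [Nontrivial R] [AddCommGroup M]
    [Module R M] [NoZeroSMulDivisors R M] (hM : Module.IsTorsion R M) : Subsingleton M :=
  subsingleton_of_forall_eq 0 fun x ↦ by
    obtain ⟨⟨a, ha⟩, hax⟩ := hM (x := x)
    rw [Submonoid.mk_smul] at hax
    exact (eq_zero_or_eq_zero_of_smul_eq_zero hax).resolve_left (nonZeroDivisors.ne_zero ha)

section TorsionFree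

variable {R M : Type*} [CommRing R] [IsDomain R] [AddCommGroup M] [Module R M] [Module.Finite R M]

theorem Module.Finite.exists_injective_pi_of_isTorsionFree [Module.IsTorsionFree R M] :
    ∃ (n : ℕ) (f : M →ₗ[R] Fin n → R), Function.Injective f := by
  classical
  obtain ⟨n, s, hs⟩ := Module.Finite.exists_fin (R := R) (M := M)
  obtain ⟨I, hI, hmax⟩ := exists_maximal_linearIndepOn R s
  let S := span R (Set.range fun i : I ↦ s i)
  -- a maximal independent subfamily spans a submodule of full rank, so `M ⧸ S` is torsion
  have htop : torsion R (M ⧸ S) = ⊤ := by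
    rw [eq_top_iff, ← LinearMap.range_eq_top.mpr S.mkQ_surjective, LinearMap.range_eq_map, ← hs,
      map_span, span_le]
    rintro _ ⟨_, ⟨i, rfl⟩, rfl⟩
    by_cases hi : i ∈ I
    · rw [mkQ_apply, (Quotient.mk_eq_zero S).mpr (subset_span ⟨⟨i, hi⟩, rfl⟩)]
      exact zero_mem _
    · obtain ⟨a, ha, haS⟩ := hmax i hi
      refine ⟨⟨a, mem_nonZeroDivisors_of_ne_zero ha⟩, ?_⟩
      rw [Submonoid.mk_smul, ← map_smul, mkQ_apply, Quotient.mk_eq_zero]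
      rwa [Set.image_eq_range] at haS
  have hquot : Module.IsTorsion R (M ⧸ S) := fun x ↦ mem_torsion_iff x |>.mp (htop ▸ mem_top)
  obtain ⟨d, hd, hd0⟩ := annihilator_top_inter_nonZeroDivisors hquot
  have hdS : ∀ x : M, d • x ∈ S := fun x ↦ by
    simpa [← Quotient.mk_eq_zero, ← Quotient.mk_smul] using
      Submodule.mem_annihilator.mp hd (S.mkQ x) mem_top
  have : Fintype I := (Set.toFinite I).fintype
  let e : S ≃ₗ[R] Fin (Fintype.card I) → R :=
    (Module.Basis.span hI).equivFun ≪≫ₗ LinearEquiv.funCongrLeft R R (Fintype.equivFin I).symm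
  let φ : M →ₗ[R] S := (d • LinearMap.id).codRestrict S hdS
  have hφ : Function.Injective φ := fun x y hxy ↦
    smul_right_injective M (nonZeroDivisors.ne_zero hd0) congr(($hxy : M))
  exact ⟨_, e.toLinearMap ∘ₗ φ, e.injective.comp hφ⟩

theorem exists_linearMap_apply_ne_zero_of_notMem_torsion {x : M} (hx : x ∉ torsion R M) :
    ∃ f : M →ₗ[R] R, f x ≠ 0 := by
  obtain ⟨n, e, he⟩ :=
    Module.Finite.exists_injective_pi_of_isTorsionFree (R := R) (M := M ⧸ torsion R M)
  have : e (mkQ _ x) ≠ 0 := by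
    rwa [Ne, ← map_zero e, he.eq_iff, mkQ_apply, Quotient.mk_eq_zero]
  obtain ⟨i, hi⟩ := Function.ne_iff.mp this
  exact ⟨LinearMap.proj i ∘ₗ e ∘ₗ mkQ _, hi⟩

end TorsionFree

section Subcategory

variable {R : Type u} [CommRing R] {C : Set (ModuleCat.{u} R)}

theorem ExtClosed.mem_of_mem_of_mem_quotient (hext : ExtClosed R C) {M : Type u} [AddCommGroup M]
    [Module R M] [Module.Finite R M] (N : Submodule R M) (hN : ModuleCat.of R N ∈ C)
    (hQ : ModuleCat.of R (M ⧸ N) ∈ C) : ModuleCat.of R M ∈ C :=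
  hext (.of R N) (.of R M) (.of R (M ⧸ N)) ‹_› N.subtype N.mkQ N.injective_subtype
    N.mkQ_surjective (by rw [range_subtype, ker_mkQ]) hN hQ

theorem ExtClosed.prod_mem (hext : ExtClosed R C) {M N : Type u} [AddCommGroup M] [Module R M]
    [AddCommGroup N] [Module R N] [Module.Finite R M] [Module.Finite R N]
    (hM : ModuleCat.of R M ∈ C) (hN : ModuleCat.of R N ∈ C) : ModuleCat.of R (M × N) ∈ C :=
  hext (.of R M) (.of R (M × N)) (.of R N) inferInstance (LinearMap.inl R M N)
    (LinearMap.snd R M N) LinearMap.inl_injective LinearMap.snd_surjective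
    (LinearMap.ker_snd R M N).symm hM hN

theorem ExtClosed.pi_mem (hC : IsModSubcat R C) (hext : ExtClosed R C)
    (hR : ModuleCat.of R R ∈ C) (n : ℕ) : ModuleCat.of R (Fin n → R) ∈ C := by
  induction n with
  | zero => exact hC.2.1 _ inferInstance
  | succ n ih => exact hC.1 _ _ (Fin.consLinearEquiv R fun _ ↦ R) (hext.prod_mem hR ih)

theorem ImagesClosed.mem_of_surjective_of_injective (hC : IsModSubcat R C)
    (himg : ImagesClosed R C) {M₁ M₂ : ModuleCat.{u} R} (h₁ : M₁ ∈ C) (h₂ : M₂ ∈ C)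
    {N : Type u} [AddCommGroup N] [Module R N] (p : M₁ →ₗ[R] N) (hp : Function.Surjective p)
    (i : N →ₗ[R] M₂) (hi : Function.Injective i) : ModuleCat.of R N ∈ C := by
  have : LinearMap.range (i ∘ₗ p) = LinearMap.range i := by
    rw [LinearMap.range_comp, LinearMap.range_eq_top.mpr hp, Submodule.map_top]
  exact hC.1 _ _ ((LinearEquiv.ofEq _ _ this).trans (LinearEquiv.ofInjective i hi).symm)
    (himg M₁ h₁ M₂ h₂ _)

theorem mem_of_isTorsionFree [IsDomain R] (hC : IsModSubcat R C) (himg : ImagesClosed R C)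
    (hext : ExtClosed R C) (hR : ModuleCat.of R R ∈ C) (N : Type u) [AddCommGroup N] [Module R N]
    [Module.Finite R N] [Module.IsTorsionFree R N] : ModuleCat.of R N ∈ C := by
  obtain ⟨k, p, hp⟩ := Module.Finite.exists_fin' R N
  obtain ⟨n, i, hi⟩ := Module.Finite.exists_injective_pi_of_isTorsionFree (R := R) (M := N)
  exact himg.mem_of_surjective_of_injective hC (hext.pi_mem hC hR k) (hext.pi_mem hC hR n)
    p hp i hi

theorem mem_of_isFiniteLength [IsLocalRing R] (hC : IsModSubcat R C) (hext : ExtClosed R C)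
    {S : ModuleCat.{u} R} (hS : S ∈ C) [IsSimpleModule R S] {N : Type u} [AddCommGroup N]
    [Module R N] (hN : IsFiniteLength R N) : ModuleCat.of R N ∈ C := by
  induction hN with
  | of_subsingleton => exact hC.2.1 _ ‹_›
  | @of_simple_quotient M _ _ N _ hN ih =>
    have : IsNoetherian R M :=
      (isFiniteLength_iff_isNoetherian_isArtinian.mp (.of_simple_quotient hN)).1
    obtain ⟨e⟩ := IsLocalRing.nonempty_linearEquiv_of_isSimpleModule (R := R) S (M ⧸ N)
    exact hext.mem_of_mem_of_mem_quotient N ih (hC.1 _ _ e hS)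

section Noetherian

variable [IsNoetherianRing R]

theorem comap_mkQ_range_mem (hC : IsModSubcat R C) (himg : ImagesClosed R C)
    (hext : ExtClosed R C) {W B : ModuleCat.{u} R} (hW : W ∈ C) (hB : B ∈ C) {T : Submodule R W}
    (hT : ModuleCat.of R T ∈ C) (ψ : B →ₗ[R] W ⧸ T) :
    ModuleCat.of R (comap T.mkQ (LinearMap.range ψ)) ∈ C := by
  have : Module.Finite R W := hC.2.2 W hW
  have : Module.Finite R B := hC.2.2 B hB
  -- the fibre product `E` of `W → W ⧸ T ← B` is an extension of `B` by `T`
  let E : Submodule R (W × B) :=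
    LinearMap.eqLocus (T.mkQ ∘ₗ LinearMap.fst R W B) (ψ ∘ₗ LinearMap.snd R W B)
  have hE (p : W × B) : p ∈ E ↔ T.mkQ p.1 = ψ p.2 := Iff.rfl
  let f : T →ₗ[R] E := (LinearMap.inl R W B ∘ₗ T.subtype).codRestrict E fun t ↦ by simp [hE]
  let g : E →ₗ[R] B := LinearMap.snd R W B ∘ₗ E.subtype
  have hf : Function.Injective f := fun s t h ↦ Subtype.ext congr(($h : W × B).1)
  have hg : Function.Surjective g := fun b ↦ by
    obtain ⟨w, hw⟩ := T.mkQ_surjective (ψ b)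
    exact ⟨⟨(w, b), hw⟩, rfl⟩
  have hfg : LinearMap.range f = LinearMap.ker g := by
    ext ⟨⟨w, b⟩, hwb⟩
    simp only [LinearMap.mem_range, LinearMap.mem_ker]
    constructor
    · rintro ⟨t, ht⟩
      exact congr(($ht : W × B).2).symm
    · intro (hb : b = 0)
      subst hb
      have hw : w ∈ T := by simpa [hE] using hwb
      exact ⟨⟨w, hw⟩, rfl⟩
  have hEC : ModuleCat.of R E ∈ C := hext (.of R T) (.of R E) B inferInstance f g hf hg hfg hT hB
  have hrange : LinearMap.range (LinearMap.fst R W B ∘ₗ E.subtype) =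
      comap T.mkQ (LinearMap.range ψ) := by
    ext w
    simp [hE, eq_comm]
  exact hC.1 _ _ (LinearEquiv.ofEq _ _ hrange) (himg _ hEC W hW _)

variable [IsDomain R] [Ring.KrullDimLE 1 R] [IsLocalRing R]

theorem exists_isSimpleModule_mem (hC : IsModSubcat R C) (himg : ImagesClosed R C)
    {M : ModuleCat.{u} R} (hM : M ∈ C) (htf : ¬ NoZeroSMulDivisors R M) :
    ∃ S ∈ C, IsSimpleModule R S := by
  have : Module.Finite R M := hC.2.2 M hM
  rw [noZeroSMulDivisors_iff_right_eq_zero_of_smul] at htf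
  push Not at htf
  obtain ⟨r, hr, x, hrx, hx⟩ := htf
  have : IsArtinian R (R ∙ x) := isArtinian_of_isTorsionBy hr fun ⟨y, hy⟩ ↦ by
    obtain ⟨c, rfl⟩ := mem_span_singleton.mp hy
    exact Subtype.ext (by simp [smul_comm r c, hrx])
  obtain ⟨S, -, hS⟩ := exists_isSimpleModule_le (N := R ∙ x) (by simpa using hx)
  have : Nontrivial M := ⟨⟨x, 0, hx⟩⟩
  obtain ⟨p, hp⟩ := IsLocalRing.exists_surjective_of_isSimpleModule (R := R) (M := M) S
  exact ⟨_, himg.mem_of_surjective_of_injective hC hM hM p hp S.subtype S.injective_subtype, hS⟩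

theorem exists_mem_of_lt_of_smul_mem (hC : IsModSubcat R C) (himg : ImagesClosed R C)
    (hext : ExtClosed R C) {W : ModuleCat.{u} R} (hW : W ∈ C) {T X : Submodule R W}
    (hTX : T < X) (hT : ModuleCat.of R T ∈ C) {a : R} (ha : a ≠ 0)
    (haX : ∀ x ∈ X, a • x ∈ T) : ∃ S, T < S ∧ S ≤ X ∧ ModuleCat.of R S ∈ C := by
  have : Module.Finite R W := hC.2.2 W hW
  have hXT : X.map T.mkQ ≠ ⊥ := by
    rw [Ne, ← LinearMap.le_ker_iff_map, ker_mkQ]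
    exact hTX.not_ge
  have : IsArtinian R (X.map T.mkQ) := isArtinian_of_isTorsionBy ha fun ⟨_, x, hx, hxq⟩ ↦ by
    subst hxq
    refine Subtype.ext ?_
    change a • T.mkQ x = 0
    rw [← map_smul, mkQ_apply, Quotient.mk_eq_zero]
    exact haX x hx
  obtain ⟨S, hSX, hS⟩ := exists_isSimpleModule_le hXT
  obtain ⟨x, hxX, hxT⟩ := SetLike.exists_of_lt hTX
  have : Nontrivial W := nontrivial_of_ne x 0 fun h ↦ hxT (h ▸ T.zero_mem)
  obtain ⟨p, hp⟩ := IsLocalRing.exists_surjective_of_isSimpleModule (R := R) (M := W) S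
  have hS_range : LinearMap.range (S.subtype ∘ₗ p) = S := by
    rw [LinearMap.range_comp, LinearMap.range_eq_top.mpr hp, Submodule.map_top, range_subtype]
  refine ⟨comap T.mkQ S, ?_, ?_, ?_⟩
  · simpa [comap_bot] using
      comap_strictMono_of_surjective T.mkQ_surjective (isSimpleModule_iff_isAtom.mp hS).bot_lt
  · simpa [comap_map_mkQ, hTX.le] using comap_mono (f := T.mkQ) hSX
  · rw [← hS_range]
    exact comap_mkQ_range_mem hC himg hext hW hW hT (S.subtype ∘ₗ p)

theorem mem_of_le_of_smul_mem (hC : IsModSubcat R C) (himg : ImagesClosed R C)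
    (hext : ExtClosed R C) {W : ModuleCat.{u} R} (hW : W ∈ C) {T X : Submodule R W}
    (hTX : T ≤ X) (hT : ModuleCat.of R T ∈ C) {a : R} (ha : a ≠ 0)
    (haX : ∀ x ∈ X, a • x ∈ T) : ModuleCat.of R X ∈ C := by
  have : Module.Finite R W := hC.2.2 W hW
  induction T using WellFoundedGT.induction with
  | ind T ih =>
    obtain rfl | hlt := hTX.eq_or_lt
    · exact hT
    obtain ⟨S, hTS, hSX, hS⟩ := exists_mem_of_lt_of_smul_mem hC himg hext hW hlt hT ha haX
    exact ih S hTS hSX hS fun x hx ↦ hTS.le (haX x hx)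

theorem self_mem_of_not_isTorsion (hC : IsModSubcat R C) (himg : ImagesClosed R C)
    (hext : ExtClosed R C) {M : ModuleCat.{u} R} (hM : M ∈ C) (hM' : ¬ Module.IsTorsion R M) :
    ModuleCat.of R R ∈ C := by
  have : Module.Finite R M := hC.2.2 M hM
  obtain ⟨x, hx⟩ := not_forall.mp hM'
  replace hx : x ∉ torsion R M := fun h ↦ hx ((mem_torsion_iff x).mp h)
  obtain ⟨φ, hφ⟩ := exists_linearMap_apply_ne_zero_of_notMem_torsion hx
  let ι := LinearMap.toSpanSingleton R M x
  have hι : Function.Injective ι := by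
    rw [← LinearMap.ker_eq_bot, eq_bot_iff]
    intro r (hr : r • x = 0)
    rw [mem_bot]
    by_contra h0
    exact hx ((mem_torsion_iff x).mpr ⟨⟨r, mem_nonZeroDivisors_of_ne_zero h0⟩, hr⟩)
  -- `φ x • Rx` lies in the image of the endomorphism `φ(-) • x` of `M`
  have hX : ModuleCat.of R (LinearMap.range ι) ∈ C := by
    refine mem_of_le_of_smul_mem hC himg hext hM (LinearMap.range_comp_le_range φ ι)
      (himg M hM M hM (ι ∘ₗ φ)) hφ ?_
    rintro _ ⟨c, rfl⟩
    exact ⟨c • x, by simp [ι, smul_smul, mul_comm]⟩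
  exact hC.1 _ _ (LinearEquiv.ofInjective ι hι).symm hX

theorem mem_of_finite (hC : IsModSubcat R C) (himg : ImagesClosed R C) (hext : ExtClosed R C)
    {S : ModuleCat.{u} R} (hS : S ∈ C) [IsSimpleModule R S] (hR : ModuleCat.of R R ∈ C)
    (M : Type u) [AddCommGroup M] [Module R M] [Module.Finite R M] : ModuleCat.of R M ∈ C :=
  hext.mem_of_mem_of_mem_quotient (torsion R M)
    (mem_of_isFiniteLength hC hext hS (isFiniteLength_of_isTorsion torsion_isTorsion))
    (mem_of_isTorsionFree hC himg hext hR _)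

end Noetherian

end Subcategory

section Examples

variable {A : Type u} [Ring A]

theorem imagesClosed_subsingleton : ImagesClosed A {M | Subsingleton M} :=
  fun _ _ _ (_ : Subsingleton _) _ ↦ inferInstanceAs (Subsingleton (LinearMap.range _))

theorem extClosed_subsingleton : ExtClosed A {M | Subsingleton M} := by
  intro L M N _ f g _ _ hfg (_ : Subsingleton L) (_ : Subsingleton N)
  refine subsingleton_of_forall_eq 0 fun x ↦ ?_
  obtain ⟨l, rfl⟩ : x ∈ LinearMap.range f := hfg ▸ Subsingleton.elim (g x) 0
  rw [Subsingleton.elim l 0, map_zero]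

theorem imagesClosed_isFiniteLength : ImagesClosed A {M | IsFiniteLength A M} :=
  fun _ _ _ h₂ f ↦ IsFiniteLength.of_injective (f := (LinearMap.range f).subtype) h₂
    (LinearMap.range f).injective_subtype

theorem extClosed_isFiniteLength : ExtClosed A {M | IsFiniteLength A M} := by
  intro L M N _ f g _ _ hfg hL hN
  obtain ⟨_, _⟩ := isFiniteLength_iff_isNoetherian_isArtinian.mp hL
  obtain ⟨_, _⟩ := isFiniteLength_iff_isNoetherian_isArtinian.mp hN
  exact isFiniteLength_iff_isNoetherian_isArtinian.mpr
    ⟨isNoetherian_of_range_eq_ker f g hfg, isArtinian_of_range_eq_ker f g hfg⟩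

theorem imagesClosed_finite_noZeroSMulDivisors :
    ImagesClosed A {M | Module.Finite A M ∧ NoZeroSMulDivisors A M} :=
  fun _ ⟨_, _⟩ _ ⟨_, _⟩ _ ↦
    ⟨inferInstance, Subtype.val_injective.noZeroSMulDivisors _ rfl fun _ _ ↦ rfl⟩

theorem extClosed_finite_noZeroSMulDivisors :
    ExtClosed A {M | Module.Finite A M ∧ NoZeroSMulDivisors A M} := by
  intro L M N hM f g hf _ hfg ⟨_, _⟩ ⟨_, _⟩
  refine ⟨hM, ⟨fun {r x} hrx ↦ or_iff_not_imp_left.mpr fun hr ↦ ?_⟩⟩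
  have hgx : g x = 0 := (eq_zero_or_eq_zero_of_smul_eq_zero
    (by rw [← map_smul, hrx, map_zero] : r • g x = 0)).resolve_left hr
  obtain ⟨l, rfl⟩ : x ∈ LinearMap.range f := hfg ▸ hgx
  have hl : r • l = 0 := hf (by rw [map_smul, hrx, map_zero])
  rw [(eq_zero_or_eq_zero_of_smul_eq_zero hl).resolve_left hr, map_zero]

theorem imagesClosed_finite : ImagesClosed A {M | Module.Finite A M} :=
  fun _ (_ : Module.Finite A _) _ _ _ ↦ inferInstanceAs (Module.Finite A (LinearMap.range _))

theorem extClosed_finite : ExtClosed A {M | Module.Finite A M} :=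
  fun _ _ _ hM _ _ _ _ _ _ _ ↦ hM

end Examples

theorem ie_closed_classification_dim_one_local_domain
    (R : Type u) [CommRing R] [IsNoetherianRing R] [IsLocalRing R] [IsDomain R]
    (hdim : ringKrullDim R = 1)
    (C : Set (ModuleCat.{u} R)) (hC : IsModSubcat R C) :
    (ImagesClosed R C ∧ ExtClosed R C) ↔
      (C = {M : ModuleCat.{u} R | Subsingleton M} ∨
       C = {M : ModuleCat.{u} R | IsFiniteLength R M} ∨
       C = {M : ModuleCat.{u} R | Module.Finite R M ∧ NoZeroSMulDivisors R M} ∨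
       C = {M : ModuleCat.{u} R | Module.Finite R M}) := by
  have : Ring.KrullDimLE 1 R := Ring.krullDimLE_iff.mpr hdim.le
  refine ⟨fun ⟨himg, hext⟩ ↦ ?_, ?_⟩
  · by_cases hTF : ∀ M ∈ C, NoZeroSMulDivisors R M <;>
      by_cases hT : ∀ M ∈ C, Module.IsTorsion R M
    · refine .inl <| Set.ext fun M ↦ ⟨fun hM ↦ ?_, hC.2.1 M⟩
      have := hTF M hM
      exact (hT M hM).subsingleton
    · obtain ⟨_, hM, h⟩ := not_forall₂.mp hT
      have hR := self_mem_of_not_isTorsion hC himg hext hM h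
      refine .inr <| .inr <| .inl <| Set.ext fun M ↦ ⟨fun hM ↦ ⟨hC.2.2 M hM, hTF M hM⟩, ?_⟩
      rintro ⟨_, hM⟩
      -- instance search does not find this on the carrier of a `ModuleCat`
      have : Module.IsTorsionFree R M :=
        .of_smul_eq_zero fun _ _ ↦ hM.eq_zero_or_eq_zero_of_smul_eq_zero
      exact mem_of_isTorsionFree hC himg hext hR M
    · obtain ⟨_, hM, h⟩ := not_forall₂.mp hTF
      obtain ⟨S, hS, _⟩ := exists_isSimpleModule_mem hC himg hM h
      refine .inr <| .inl <| Set.ext fun M ↦ ⟨fun hM ↦ ?_, mem_of_isFiniteLength hC hext hS⟩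
      have := hC.2.2 M hM
      exact isFiniteLength_of_isTorsion (hT M hM)
    · obtain ⟨_, hM₁, h₁⟩ := not_forall₂.mp hTF
      obtain ⟨S, hS, _⟩ := exists_isSimpleModule_mem hC himg hM₁ h₁
      obtain ⟨_, hM₂, h₂⟩ := not_forall₂.mp hT
      have hR := self_mem_of_not_isTorsion hC himg hext hM₂ h₂
      exact .inr <| .inr <| .inr <| Set.ext fun M ↦
        ⟨hC.2.2 M, fun (_ : Module.Finite R M) ↦ mem_of_finite hC himg hext hS hR M⟩
  · rintro (rfl | rfl | rfl | rfl)
    exacts [⟨imagesClosed_subsingleton, extClosed_subsingleton⟩,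
      ⟨imagesClosed_isFiniteLength, extClosed_isFiniteLength⟩,
      ⟨imagesClosed_finite_noZeroSMulDivisors, extClosed_finite_noZeroSMulDivisors⟩,
      ⟨imagesClosed_finite, extClosed_finite⟩]
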